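/- Assume the setup, the stability assumption, and the γ-feasibility assumption. Then the tangent spaces are transverse: for every tangent space T' = T(L') at a rank-r symmetric matrix L' with ρ(T, T') ≤ ξ(T)/2, it holds Ω ∩ T' = {0}. -/

import Mathlib

/-!
A nonzero `M ∈ Ω ∩ T'` lies almost in `T`: `M - P_T M = (P_{T'} - P_T) M` has spectral norm at
most `ρ(T, T') ‖M‖ ≤ ξ(T)/2 ‖M‖`, so `‖M‖_∞ ≤ ‖P_T M‖_∞ + ‖M - P_T M‖ ≤ 2 ξ(T) ‖M‖`, while
`‖M‖ ≤ μ(Ω) ‖M‖_∞` because `M ∈ Ω`; hence `2 ξ(T) μ(Ω) ≥ 1`. Testing `α_{T,ξ(T)/2}` on `M / ‖M‖`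
and using that the projection onto a tangent space at most doubles the spectral norm gives
`α ≤ 2 β_Ω ≤ 2 β`. These two inequalities force `γ_max < γ_min`.
-/

noncomputable section

open scoped BigOperators
open Matrix

namespace IsingSL

/-- The space of real `d × d` matrices.  Symmetry (membership in `Sym(d)`) is imposed
through explicit hypotheses `Matrix.IsSymm`. -/
abbrev Mat (d : ℕ) := Matrix (Fin d) (Fin d) ℝ

/-- The trace inner product `⟨A, B⟩ = tr(Aᵀ B)`. -/
def minner {d : ℕ} (A B : Mat d) : ℝ := (Aᵀ * B).trace

/-- Entrywise `ℓ∞`-norm of a matrix. -/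
def normInf {d : ℕ} (M : Mat d) : ℝ := ⨆ p : Fin d × Fin d, |M p.1 p.2|

/-- Entrywise `ℓ1`-norm of a matrix. -/
def norm1 {d : ℕ} (M : Mat d) : ℝ := ∑ i, ∑ j, |M i j|

/-- Euclidean norm of a vector. -/
def vnorm {d : ℕ} (v : Fin d → ℝ) : ℝ := Real.sqrt (∑ i, v i ^ 2)

/-- Spectral norm (`ℓ2`-operator norm) of a matrix. -/
def specNorm {d : ℕ} (M : Mat d) : ℝ :=
  sSup {t | ∃ v : Fin d → ℝ, vnorm v ≤ 1 ∧ t = vnorm (M.mulVec v)}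

/-- Nuclear norm of a matrix (sum of singular values), characterized via
trace duality with the spectral norm. -/
def nucNorm {d : ℕ} (M : Mat d) : ℝ :=
  sSup {t | ∃ B : Mat d, specNorm B ≤ 1 ∧ t = minner M B}

/-- The `γ`-norm of a pair of matrices: `‖(S, L)‖_γ = max {‖S‖_∞/γ, ‖L‖}`. -/
def ganorm {d : ℕ} (γ : ℝ) (S L : Mat d) : ℝ := max (normInf S / γ) (specNorm L)

/-- The `{0,1}`-vector corresponding to `x : Fin d → Bool`. -/
def b2r {d : ℕ} (x : Fin d → Bool) : Fin d → ℝ := fun i => if x i then 1 else 0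

/-- The sufficient statistics `Φ(x) = x xᵀ` for `x ∈ {0,1}^d`. -/
def phi {d : ℕ} (x : Fin d → Bool) : Mat d := Matrix.of fun i j => b2r x i * b2r x j

/-- The log-partition function `a(Θ)` of the pairwise Ising model. -/
def logA {d : ℕ} (Θ : Mat d) : ℝ :=
  Real.log (∑ x : Fin d → Bool, Real.exp (minner Θ (phi x)))

/-- The Ising probability mass function `p(x) = exp(⟨Θ, Φ(x)⟩ - a(Θ))`. -/
def isingPMF {d : ℕ} (Θ : Mat d) (x : Fin d → Bool) : ℝ :=
  Real.exp (minner Θ (phi x) - logA Θ)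

/-- `Φ* = E_Θ[Φ]`, the expected sufficient statistics; this is the gradient `∇a(Θ)`
of the log-partition function w.r.t. the trace inner product. -/
def meanPhi {d : ℕ} (Θ : Mat d) : Mat d := ∑ x : Fin d → Bool, isingPMF Θ x • phi x

/-- The Hessian `∇²a(Θ)` of the log-partition function as a linear operator on matrices;
it is the covariance operator `M ↦ E[⟨Φ,M⟩Φ] - ⟨E[Φ],M⟩E[Φ]` of the sufficient statistics. -/
def hessA {d : ℕ} (Θ : Mat d) (M : Mat d) : Mat d :=
  (∑ x : Fin d → Bool, (isingPMF Θ x * minner (phi x) M) • phi x)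
    - minner (meanPhi Θ) M • meanPhi Θ

/-- The empirical second-moment matrix `Φ^n` of a sample. -/
def empPhi {d n : ℕ} (xs : Fin n → (Fin d → Bool)) : Mat d :=
  (n : ℝ)⁻¹ • ∑ k, phi (xs k)

/-- The negative log-likelihood `ℓ(Θ) = a(Θ) - ⟨Θ, Φ^n⟩`. -/
def nll {d : ℕ} (Phin Θ : Mat d) : ℝ := logA Θ - minner Θ Phin

/-- The probability of the event `E` under `n` i.i.d. samples from the Ising
distribution with parameter `Θ`. -/
def samplesProb {d : ℕ} (Θ : Mat d) (n : ℕ) (E : Set (Fin n → (Fin d → Bool))) : ℝ :=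
  ∑ xs : Fin n → (Fin d → Bool), E.indicator (fun ys => ∏ k, isingPMF Θ (ys k)) xs

/-- Probability vectors on `{0,1}^d`. -/
def IsProbVec {d : ℕ} (p : (Fin d → Bool) → ℝ) : Prop :=
  (∀ x, 0 ≤ p x) ∧ ∑ x : Fin d → Bool, p x = 1

/-- The (Shannon) entropy `H(p) = -Σ_x p(x) log p(x)` (with `0 log 0 = 0`). -/
def entropy {d : ℕ} (p : (Fin d → Bool) → ℝ) : ℝ :=
  -∑ x : Fin d → Bool, p x * Real.log (p x)

/-- The expectation `E_p[Φ]` of the sufficient statistics under `p`. -/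
def Ephi {d : ℕ} (p : (Fin d → Bool) → ℝ) : Mat d :=
  ∑ x : Fin d → Bool, p x • phi x

/-- The linear identification of `d × d` matrices with the euclidean space on `d·d`
coordinates; under this identification the euclidean inner product corresponds to the
trace inner product on matrices. -/
def matEuclid (d : ℕ) : Mat d ≃ₗ[ℝ] EuclideanSpace ℝ (Fin d × Fin d) where
  toFun M := WithLp.toLp 2 (fun p => M p.1 p.2)
  invFun v := Matrix.of fun i j => v (i, j)
  map_add' _ _ := rfl
  map_smul' _ _ := rfl
  left_inv _ := rfl
  right_inv _ := rfl

/-- Orthogonal projection onto a subspace `V` of `Mat d`, w.r.t. the trace inner product. -/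
def proj {d : ℕ} (V : Submodule ℝ (Mat d)) (M : Mat d) : Mat d :=
  (matEuclid d).symm
    ((Submodule.orthogonalProjectionOnto (V.map ((matEuclid d) : Mat d →ₗ[ℝ] EuclideanSpace ℝ (Fin d × Fin d)))
      ((matEuclid d) M) : EuclideanSpace ℝ (Fin d × Fin d)))

/-- Projection onto the orthogonal complement of `V`. -/
def projPerp {d : ℕ} (V : Submodule ℝ (Mat d)) (M : Mat d) : Mat d := M - proj V M

/-- The twisting `ρ(T, T') = max_{‖M‖=1} ‖(P_T - P_{T'}) M‖` between two subspaces. -/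
def rho {d : ℕ} (T T' : Submodule ℝ (Mat d)) : ℝ :=
  sSup {t | ∃ M : Mat d, specNorm M = 1 ∧ t = specNorm (proj T M - proj T' M)}

/-- `ξ(T)`: the smallest `ξ` with `‖M‖_∞ ≤ ξ ‖M‖` for all `M ∈ T`. -/
def xi {d : ℕ} (T : Submodule ℝ (Mat d)) : ℝ :=
  sInf {c | ∀ M ∈ T, normInf M ≤ c * specNorm M}

/-- `μ(Ω)`: the smallest `μ` with `‖N‖ ≤ μ ‖N‖_∞` for all `N ∈ Ω`. -/
def mu {d : ℕ} (Om : Submodule ℝ (Mat d)) : ℝ :=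
  sInf {c | ∀ N ∈ Om, specNorm N ≤ c * normInf N}

/-- `Ω(S) = {M ∈ Sym(d) : supp(M) ⊆ supp(S)}`, the tangent space at `S` to the variety
of symmetric matrices with at most `|supp S|` nonzero entries. -/
def OmegaS {d : ℕ} (S : Mat d) : Submodule ℝ (Mat d) where
  carrier := {M | M.IsSymm ∧ ∀ i j, S i j = 0 → M i j = 0}
  add_mem' := by
    rintro a b ⟨ha, ha0⟩ ⟨hb, hb0⟩
    refine ⟨?_, fun i j h => ?_⟩
    · show (a + b)ᵀ = a + b
      rw [Matrix.transpose_add, ha, hb]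
    · show a i j + b i j = 0
      rw [ha0 i j h, hb0 i j h, add_zero]
  zero_mem' := by
    refine ⟨?_, fun i j _ => rfl⟩
    show (0 : Mat _)ᵀ = 0
    rw [Matrix.transpose_zero]
  smul_mem' := by
    rintro c a ⟨ha, ha0⟩
    refine ⟨?_, fun i j h => ?_⟩
    · show (c • a)ᵀ = c • a
      rw [Matrix.transpose_smul, ha]
    · show c * a i j = 0
      rw [ha0 i j h, mul_zero]

/-- `T(L) = {U Xᵀ + X Uᵀ : X ∈ ℝ^{d×r}}`, the tangent space at `L = U D Uᵀ` to the
variety of symmetric matrices of rank at most `r`. -/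
def TSpace {d r : ℕ} (U : Matrix (Fin d) (Fin r) ℝ) : Submodule ℝ (Mat d) where
  carrier := {M | ∃ X : Matrix (Fin d) (Fin r) ℝ, M = U * Xᵀ + X * Uᵀ}
  add_mem' := by
    rintro a b ⟨X, rfl⟩ ⟨Y, rfl⟩
    exact ⟨X + Y, by rw [Matrix.transpose_add, Matrix.mul_add, Matrix.add_mul]; abel⟩
  zero_mem' := ⟨0, by simp⟩
  smul_mem' := by
    rintro c a ⟨X, rfl⟩
    exact ⟨c • X, by rw [Matrix.transpose_smul, Matrix.mul_smul, Matrix.smul_mul, smul_add]⟩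

/-- `T'` is the tangent space `T(L')` at some rank-`r` symmetric matrix
`L' = U D Uᵀ` (restricted eigenvalue decomposition: `U` with orthonormal columns,
`D` invertible diagonal). -/
def IsTangentSpace (d r : ℕ) (T' : Submodule ℝ (Mat d)) : Prop :=
  ∃ (U : Matrix (Fin d) (Fin r) ℝ) (D : Matrix (Fin r) (Fin r) ℝ),
    Uᵀ * U = 1 ∧ D.IsDiag ∧ IsUnit D.det ∧ T' = TSpace U

/-- A solution of the tangent-space constrained problem
`min_{(S,L) ∈ Om × T'} ℓ(S+L) + λ(γ‖S‖₁ + ‖L‖_*)`. -/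
def IsYSol {d : ℕ} (Om T' : Submodule ℝ (Mat d)) (Phin : Mat d) (lam γ : ℝ)
    (p : Mat d × Mat d) : Prop :=
  p.1 ∈ Om ∧ p.2 ∈ T' ∧
    ∀ q : Mat d × Mat d, q.1 ∈ Om → q.2 ∈ T' →
      nll Phin (p.1 + p.2) + lam * (γ * norm1 p.1 + nucNorm p.2) ≤
        nll Phin (q.1 + q.2) + lam * (γ * norm1 q.1 + nucNorm q.2)

/-- A solution of the convex program
`min_{S, L ∈ Sym(d), L ⪰ 0} ℓ(S+L) + λ(γ‖S‖₁ + tr L)`. -/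
def IsSLSol {d : ℕ} (Phin : Mat d) (lam γ : ℝ) (p : Mat d × Mat d) : Prop :=
  p.1.IsSymm ∧ p.2.PosSemidef ∧
    ∀ q : Mat d × Mat d, q.1.IsSymm → q.2.PosSemidef →
      nll Phin (p.1 + p.2) + lam * (γ * norm1 p.1 + p.2.trace) ≤
        nll Phin (q.1 + q.2) + lam * (γ * norm1 q.1 + q.2.trace)

/-- The setup: a nonzero symmetric matrix `S*` and a positive-semidefinite `L*` with
restricted eigenvalue decomposition `L* = U D Uᵀ` (so `L*` has rank `r`). -/
structure Setup (d r : ℕ) where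
  Sstar : Mat d
  U : Matrix (Fin d) (Fin r) ℝ
  Dg : Matrix (Fin r) (Fin r) ℝ
  hU : Uᵀ * U = 1
  hDdiag : Dg.IsDiag
  hDunit : IsUnit Dg.det
  hSsymm : Sstar.IsSymm
  hSne : Sstar ≠ 0
  hLpsd : (U * Dg * Uᵀ).PosSemidef

namespace Setup

variable {d r : ℕ} (C : Setup d r)

/-- `L* = U D Uᵀ`. -/
def Lstar : Mat d := C.U * C.Dg * C.Uᵀ

/-- `Θ* = S* + L*`. -/
def Thstar : Mat d := C.Sstar + C.Lstar

/-- `Ω = Ω(S*)`. -/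
def Om : Submodule ℝ (Mat d) := OmegaS C.Sstar

/-- `T = T(L*)`. -/
def Tt : Submodule ℝ (Mat d) := TSpace C.U

/-- `H* = ∇²a(Θ*)`, the Hessian of the log-partition function at `Θ*`. -/
def Hop : Mat d → Mat d := hessA C.Thstar

/-- `‖H*‖`, the operator norm of `H*` w.r.t. the spectral norm. -/
def HopNorm : ℝ := sSup {t | ∃ M : Mat d, specNorm M = 1 ∧ t = specNorm (C.Hop M)}

/-- `ξ(T)`. -/
def xiT : ℝ := xi C.Tt

/-- `μ(Ω)`. -/
def muOm : ℝ := mu C.Om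

/-- `α_Ω = min {‖P_Ω H*(M)‖_∞ : M ∈ Ω, ‖M‖_∞ = 1}`. -/
def alphaOm : ℝ :=
  sInf {t | ∃ M, M ∈ C.Om ∧ normInf M = 1 ∧ t = normInf (proj C.Om (C.Hop M))}

/-- `α_{T,ε}`. -/
def alphaT (ε : ℝ) : ℝ :=
  sInf {t | ∃ T' : Submodule ℝ (Mat d), IsTangentSpace d r T' ∧ rho C.Tt T' ≤ ε ∧
    ∃ M, M ∈ T' ∧ specNorm M = 1 ∧ t = specNorm (proj T' (C.Hop M))}

/-- `δ_Ω = max {‖P_{Ω^⊥} H*(M)‖_∞ : M ∈ Ω, ‖M‖_∞ = 1}`. -/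
def deltaOm : ℝ :=
  sSup {t | ∃ M, M ∈ C.Om ∧ normInf M = 1 ∧ t = normInf (projPerp C.Om (C.Hop M))}

/-- `δ_{T,ε}`. -/
def deltaT (ε : ℝ) : ℝ :=
  sSup {t | ∃ T' : Submodule ℝ (Mat d), IsTangentSpace d r T' ∧ rho C.Tt T' ≤ ε ∧
    ∃ M, M ∈ T' ∧ specNorm M = 1 ∧ t = specNorm (projPerp T' (C.Hop M))}

/-- `β_Ω = max {‖H*(M)‖ : M ∈ Ω, ‖M‖ = 1}`. -/
def betaOm : ℝ :=
  sSup {t | ∃ M, M ∈ C.Om ∧ specNorm M = 1 ∧ t = specNorm (C.Hop M)}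

/-- `β_T`. -/
def betaT : ℝ :=
  sSup {t | ∃ T' : Submodule ℝ (Mat d), IsTangentSpace d r T' ∧ rho C.Tt T' ≤ C.xiT / 2 ∧
    ∃ M, M ∈ T' ∧ normInf M = 1 ∧ t = normInf (C.Hop M)}

/-- `β = max {β_Ω, β_T}`. -/
def betaC : ℝ := max C.betaOm C.betaT

/-- `α = min {α_Ω, α_{T,ξ(T)/2}}`. -/
def alphaC : ℝ := min C.alphaOm (C.alphaT (C.xiT / 2))

/-- `δ = max {δ_Ω, δ_{T,ξ(T)/2}}`. -/
def deltaC : ℝ := max C.deltaOm (C.deltaT (C.xiT / 2))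

/-- The stability assumption: `α > 0` and `δ/α ≤ 1 - 2ν` for some `ν ∈ (0, 1/2]`. -/
def Stability (ν : ℝ) : Prop :=
  0 < C.alphaC ∧ 0 < ν ∧ ν ≤ 1 / 2 ∧ C.deltaC / C.alphaC ≤ 1 - 2 * ν

/-- `γ_min = 3β(2-ν)ξ(T)/(να)`. -/
def gammaMin (ν : ℝ) : ℝ := 3 * C.betaC * (2 - ν) * C.xiT / (ν * C.alphaC)

/-- `γ_max = να/(2β(2-ν)μ(Ω))`. -/
def gammaMax (ν : ℝ) : ℝ := ν * C.alphaC / (2 * C.betaC * (2 - ν) * C.muOm)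

/-- The `γ`-feasibility assumption: the range `[γ_min, γ_max]` is non-empty. -/
def GammaFeasible (ν : ℝ) : Prop := C.gammaMin ν ≤ C.gammaMax ν

/-- `ω = max {να/(3β(2-ν)), 1}`. -/
def omg (ν : ℝ) : ℝ := max (ν * C.alphaC / (3 * C.betaC * (2 - ν))) 1

/-- `c₂ = 40/α + 1/‖H*‖`. -/
def c2 : ℝ := 40 / C.alphaC + 1 / C.HopNorm

/-- `c₃ = (6(2-ν)/ν + 1) c₂² ‖H*‖ ω`. -/
def c3 (ν : ℝ) : ℝ := (6 * (2 - ν) / ν + 1) * C.c2 ^ 2 * C.HopNorm * C.omg ν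

/-- `c₄ = c₂ + 3αc₂²(2-ν)/(16(3-ν))`. -/
def c4 (ν : ℝ) : ℝ := C.c2 + 3 * C.alphaC * C.c2 ^ 2 * (2 - ν) / (16 * (3 - ν))

/-- `c₅ = max {c₃, c₄}`. -/
def c5 (ν : ℝ) : ℝ := max (C.c3 ν) (C.c4 ν)

/-- `c₆ = ναc₂/(2β(2-ν))`. -/
def c6 (ν : ℝ) : ℝ := ν * C.alphaC * C.c2 / (2 * C.betaC * (2 - ν))

/-- `c₀ = 2 l(r₀) ω max{να/(2β(2-ν)), 1}²`. -/
def c0 (ν l0 : ℝ) : ℝ :=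
  2 * l0 * C.omg ν * (max (ν * C.alphaC / (2 * C.betaC * (2 - ν))) 1) ^ 2

/-- `c₁ = max{1, να/(2β(2-ν))}⁻¹ r₀/2`. -/
def c1 (ν r0 : ℝ) : ℝ :=
  (max 1 (ν * C.alphaC / (2 * C.betaC * (2 - ν))))⁻¹ * r0 / 2

/-- `s_min`, the smallest absolute value of a nonzero entry of `S*`. -/
def smin : ℝ := sInf {t | ∃ i j, C.Sstar i j ≠ 0 ∧ t = |C.Sstar i j|}

/-- `σ_min`, the smallest nonzero eigenvalue of `L*`. -/
def sigmin : ℝ := sInf {t | t ≠ 0 ∧ ∃ i, t = C.hLpsd.1.eigenvalues i}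

/-- The gap assumption: `s_min ≥ c₆λ_n/μ(Ω)` and `σ_min ≥ c₅λ_n/ξ(T)²`. -/
def GapAssumption (ν lam : ℝ) : Prop :=
  C.c6 ν * lam / C.muOm ≤ C.smin ∧ C.c5 ν * lam / C.xiT ^ 2 ≤ C.sigmin

/-- `l0` is a Lipschitz constant (in operator norm w.r.t. the spectral norm) of the
Hessian `∇²a` on the ball `{Θ : ‖Θ - Θ*‖ ≤ r0}`. -/
def HessLip (r0 l0 : ℝ) : Prop :=
  ∀ Θ Θ' : Mat d, specNorm (Θ - C.Thstar) ≤ r0 → specNorm (Θ' - C.Thstar) ≤ r0 →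
    ∀ M : Mat d, specNorm (hessA Θ M - hessA Θ' M) ≤ l0 * specNorm (Θ - Θ') * specNorm M

/-- The correct model set `M`. -/
def Mset (γ ν lam : ℝ) : Set (Mat d × Mat d) :=
  {p | p.1 ∈ C.Om ∧ p.2.IsSymm ∧ p.2.rank ≤ C.Lstar.rank ∧
    ganorm γ (C.Hop ((p.1 - C.Sstar) + (p.2 - C.Lstar)))
      (C.Hop ((p.1 - C.Sstar) + (p.2 - C.Lstar))) ≤ 9 * lam ∧
    specNorm (projPerp C.Tt (p.2 - C.Lstar)) ≤ C.xiT * lam / (C.omg ν * C.HopNorm)}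

end Setup

open scoped Matrix.Norms.L2Operator

section MatrixNorms

variable {d : ℕ}

lemma vnorm_eq_norm (v : Fin d → ℝ) : vnorm v = ‖WithLp.toLp 2 v‖ := by
  simp [vnorm, EuclideanSpace.norm_eq]

lemma specNorm_eq_norm (M : Mat d) : specNorm M = ‖M‖ := by
  rw [specNorm, Matrix.cstar_norm_def, ← ContinuousLinearMap.sSup_unitClosedBall_eq_norm]
  congr 1
  ext t
  constructor
  · rintro ⟨v, hv, rfl⟩
    exact ⟨WithLp.toLp 2 v, by simpa [vnorm_eq_norm] using hv, by simp [vnorm_eq_norm]⟩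
  · rintro ⟨x, hx, rfl⟩
    exact ⟨WithLp.ofLp x, by simpa [vnorm_eq_norm] using hx,
      by rw [vnorm_eq_norm, ← Matrix.toEuclideanCLM_toLp, WithLp.toLp_ofLp]⟩

lemma abs_apply_le_norm (M : Mat d) (i j : Fin d) : |M i j| ≤ ‖M‖ := by
  have hcol := M.l2_opNorm_mulVec (EuclideanSpace.single j 1)
  have hentry := PiLp.norm_apply_le (WithLp.toLp 2 (M.col j)) i
  simp only [PiLp.ofLp_single, Matrix.mulVec_single, MulOpposite.op_one, one_smul,
    PiLp.continuousLinearEquiv_symm_apply, PiLp.norm_single, norm_one, mul_one, Matrix.col_apply,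
    Real.norm_eq_abs] at hcol hentry
  exact hentry.trans hcol

lemma norm_transpose (M : Mat d) : ‖Mᵀ‖ = ‖M‖ := by
  rw [← Matrix.conjTranspose_eq_transpose_of_trivial, Matrix.l2_opNorm_conjTranspose]

lemma abs_le_normInf (M : Mat d) (i j : Fin d) : |M i j| ≤ normInf M :=
  le_ciSup (f := fun p : Fin d × Fin d => |M p.1 p.2|) (Set.finite_range _).bddAbove (i, j)

lemma normInf_le {M : Mat d} {c : ℝ} (h : ∀ i j, |M i j| ≤ c) (hc : 0 ≤ c) :
    normInf M ≤ c :=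
  Real.iSup_le (fun p => h p.1 p.2) hc

lemma normInf_nonneg (M : Mat d) : 0 ≤ normInf M :=
  Real.iSup_nonneg fun _ => abs_nonneg _

lemma normInf_add_le (A B : Mat d) : normInf (A + B) ≤ normInf A + normInf B :=
  normInf_le (fun i j => (abs_add_le _ _).trans
    (add_le_add (abs_le_normInf A i j) (abs_le_normInf B i j)))
    (add_nonneg (normInf_nonneg A) (normInf_nonneg B))

lemma normInf_le_norm (M : Mat d) : normInf M ≤ ‖M‖ :=
  normInf_le (abs_apply_le_norm M) (norm_nonneg M)

lemma normInf_zero : normInf (0 : Mat d) = 0 := by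
  simp [normInf]

lemma normInf_pos {M : Mat d} (hM : M ≠ 0) : 0 < normInf M := by
  obtain ⟨i, j, hij⟩ : ∃ i j, M i j ≠ 0 := by
    by_contra! h
    exact hM (Matrix.ext h)
  exact (abs_pos.2 hij).trans_le (abs_le_normInf M i j)

lemma exists_norm_le_mul_normInf : ∃ c : ℝ, ∀ M : Mat d, ‖M‖ ≤ c * normInf M := by
  refine ⟨∑ i, ∑ j, ‖(Matrix.single i j 1 : Mat d)‖, fun M => ?_⟩
  conv_lhs => rw [Matrix.matrix_eq_sum_single M]
  calc ‖∑ i, ∑ j, Matrix.single i j (M i j)‖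
      ≤ ∑ i, ∑ j, ‖Matrix.single i j (M i j)‖ :=
        (norm_sum_le _ _).trans (Finset.sum_le_sum fun i _ => norm_sum_le _ _)
    _ ≤ ∑ i, ∑ j, normInf M * ‖(Matrix.single i j 1 : Mat d)‖ := by
        gcongr with i _ j _
        have hsingle : Matrix.single i j (M i j) = M i j • (Matrix.single i j 1 : Mat d) := by
          rw [Matrix.smul_single, smul_eq_mul, mul_one]
        rw [hsingle, norm_smul, Real.norm_eq_abs]
        exact mul_le_mul_of_nonneg_right (abs_le_normInf M i j) (norm_nonneg _)
    _ = _ := by simp only [← Finset.mul_sum]; ring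

end MatrixNorms

section Constants

variable {d : ℕ}

lemma le_sInf_mul_of_pos {X : Type*} {S : Set X} {f g : X → ℝ}
    (hne : ∃ c, ∀ y ∈ S, f y ≤ c * g y) {x : X} (hx : x ∈ S) (hg : 0 < g x) :
    f x ≤ sInf {c | ∀ y ∈ S, f y ≤ c * g y} * g x := by
  rw [← div_le_iff₀ hg]
  exact le_csInf hne fun c hc => (div_le_iff₀ hg).2 (hc x hx)

lemma normInf_le_xi_mul_norm {T : Submodule ℝ (Mat d)} {M : Mat d} (hM : M ∈ T) :
    normInf M ≤ xi T * ‖M‖ := by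
  rcases eq_or_ne M 0 with rfl | hM0
  · simp [normInf_zero]
  rw [← specNorm_eq_norm]
  exact le_sInf_mul_of_pos (S := (T : Set (Mat d))) (f := normInf) (g := specNorm)
    ⟨1, fun N _ => by simpa [specNorm_eq_norm] using normInf_le_norm N⟩ hM
    (by simpa [specNorm_eq_norm] using hM0)

lemma norm_le_mu_mul_normInf {V : Submodule ℝ (Mat d)} {N : Mat d} (hN : N ∈ V) :
    ‖N‖ ≤ mu V * normInf N := by
  rcases eq_or_ne N 0 with rfl | hN0
  · simp [normInf_zero]
  obtain ⟨c, hc⟩ := exists_norm_le_mul_normInf (d := d)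
  rw [← specNorm_eq_norm]
  exact le_sInf_mul_of_pos (S := (V : Set (Mat d))) (f := specNorm) (g := normInf)
    ⟨c, fun N _ => by simpa [specNorm_eq_norm] using hc N⟩ hN (normInf_pos hN0)

lemma pos_of_forall_normInf_le_mul {T : Submodule ℝ (Mat d)} (hT : T ≠ ⊥) {c : ℝ}
    (hc : ∀ M ∈ T, normInf M ≤ c * specNorm M) : 0 < c := by
  obtain ⟨M, hMT, hM0⟩ := (Submodule.ne_bot_iff T).1 hT
  have h := (normInf_pos hM0).trans_le (hc M hMT)
  rw [specNorm_eq_norm] at h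
  exact pos_of_mul_pos_left h (norm_nonneg M)

lemma xi_pos {T : Submodule ℝ (Mat d)} (hT : T ≠ ⊥) : 0 < xi T :=
  pos_of_forall_normInf_le_mul hT fun _ hM => by
    simpa [specNorm_eq_norm] using normInf_le_xi_mul_norm hM

lemma xi_le_one {T : Submodule ℝ (Mat d)} (hT : T ≠ ⊥) : xi T ≤ 1 :=
  csInf_le ⟨0, fun _ hc => (pos_of_forall_normInf_le_mul hT hc).le⟩
    fun N _ => by simpa [specNorm_eq_norm] using normInf_le_norm N

lemma bddAbove_specNorm_apply (f : Mat d →ₗ[ℝ] Mat d) :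
    BddAbove {t | ∃ M : Mat d, specNorm M = 1 ∧ t = specNorm (f M)} := by
  refine ⟨‖LinearMap.toContinuousLinearMap f‖, ?_⟩
  rintro t ⟨M, hM, rfl⟩
  rw [specNorm_eq_norm] at hM ⊢
  simpa [hM] using (LinearMap.toContinuousLinearMap f).le_opNorm M

lemma norm_apply_le_sSup_mul (f : Mat d →ₗ[ℝ] Mat d) (X : Mat d) :
    ‖f X‖ ≤ sSup {t | ∃ M : Mat d, specNorm M = 1 ∧ t = specNorm (f M)} * ‖X‖ := by
  rcases eq_or_ne X 0 with rfl | hX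
  · simp
  have hX' : 0 < ‖X‖ := norm_pos_iff.2 hX
  have h := le_csSup (bddAbove_specNorm_apply f)
    ⟨‖X‖⁻¹ • X, by
      rw [specNorm_eq_norm, norm_smul, norm_inv, norm_norm, inv_mul_cancel₀ hX'.ne'], rfl⟩
  rwa [map_smul, specNorm_eq_norm, norm_smul, norm_inv, norm_norm, inv_mul_le_iff₀ hX',
    mul_comm] at h

end Constants

section Projection

variable {d : ℕ}

def projₗ (V : Submodule ℝ (Mat d)) : Mat d →ₗ[ℝ] Mat d :=
  (matEuclid d).symm.toLinearMap ∘ₗ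
    (V.map (matEuclid d).toLinearMap).starProjection.toLinearMap ∘ₗ (matEuclid d).toLinearMap

lemma projₗ_apply (V : Submodule ℝ (Mat d)) (M : Mat d) : projₗ V M = proj V M := rfl

lemma inner_matEuclid (A B : Mat d) :
    inner ℝ (matEuclid d A) (matEuclid d B) = minner A B := by
  simp only [PiLp.inner_apply, minner, Matrix.trace, Matrix.diag, Matrix.mul_apply,
    Matrix.transpose_apply, Fintype.sum_prod_type]
  rw [Finset.sum_comm]
  exact Finset.sum_congr rfl fun i _ => Finset.sum_congr rfl fun j _ => mul_comm _ _

lemma minner_add_left (A B C : Mat d) : minner (A + B) C = minner A C + minner B C := by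
  simp [minner, Matrix.add_mul]

lemma minner_eq_zero_of_transpose_eq_neg {A w : Mat d} (hA : Aᵀ = -A) (hw : wᵀ = w) :
    minner A w = 0 := by
  have hneg : minner A w = -(A * w).trace := by rw [minner, hA, Matrix.neg_mul, Matrix.trace_neg]
  have hpos : minner A w = (A * w).trace := by
    rw [minner, ← Matrix.trace_transpose, Matrix.transpose_mul, Matrix.transpose_transpose, hw,
      Matrix.trace_mul_comm]
  linarith

lemma proj_mem (V : Submodule ℝ (Mat d)) (M : Mat d) : proj V M ∈ V := by
  rw [← projₗ_apply]
  exact (Submodule.mem_map_equiv (p := V) (e := matEuclid d)).1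
    (Submodule.starProjection_apply_mem _ _)

lemma proj_eq_of_mem_of_minner_eq_zero {V : Submodule ℝ (Mat d)} {N m : Mat d} (hm : m ∈ V)
    (h : ∀ w ∈ V, minner (N - m) w = 0) : proj V N = m := by
  have key : (V.map (matEuclid d).toLinearMap).starProjection (matEuclid d N) = matEuclid d m := by
    refine Submodule.eq_starProjection_of_mem_of_inner_eq_zero (Submodule.mem_map_of_mem hm) ?_
    rintro - ⟨w, hw, rfl⟩
    rw [← map_sub]
    exact (inner_matEuclid _ _).trans (h w hw)
  rw [← projₗ_apply]
  simp [projₗ, key]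

lemma proj_of_mem {V : Submodule ℝ (Mat d)} {M : Mat d} (hM : M ∈ V) : proj V M = M :=
  proj_eq_of_mem_of_minner_eq_zero hM fun w _ => by simp [minner]

lemma norm_proj_sub_proj_le (V W : Submodule ℝ (Mat d)) (X : Mat d) :
    ‖proj V X - proj W X‖ ≤ rho V W * ‖X‖ :=
  norm_apply_le_sSup_mul (projₗ V - projₗ W) X

end Projection

section TangentSpace

variable {d r : ℕ} {U : Matrix (Fin d) (Fin r) ℝ}

lemma TSpace_ne_bot (hr : 1 ≤ r) (hU : Uᵀ * U = 1) : TSpace U ≠ ⊥ := by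
  refine (Submodule.ne_bot_iff _).2 ⟨U * Uᵀ + U * Uᵀ, ⟨U, rfl⟩, fun h => ?_⟩
  have htrace := congrArg Matrix.trace h
  rw [Matrix.trace_add, Matrix.trace_mul_comm, hU, Matrix.trace_one, Matrix.trace_zero] at htrace
  rw [Fintype.card_fin] at htrace
  have : (1 : ℝ) ≤ r := by exact_mod_cast hr
  linarith

lemma minner_eq_zero_of_mul_eq_zero {R : Mat d} (hR : R * U = 0) (hRt : Rᵀ * U = 0) :
    ∀ w ∈ TSpace U, minner R w = 0 := by
  rintro - ⟨X, rfl⟩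
  have hUR : Uᵀ * Rᵀ = 0 := by rw [← Matrix.transpose_mul, hR, Matrix.transpose_zero]
  rw [minner, Matrix.mul_add, Matrix.trace_add, ← Matrix.mul_assoc, hRt, ← Matrix.mul_assoc,
    Matrix.trace_mul_comm (Rᵀ * X), ← Matrix.mul_assoc, hUR]
  simp

lemma isStarProjection_one_sub_mul_transpose (hU : Uᵀ * U = 1) :
    IsStarProjection (1 - U * Uᵀ) := by
  refine IsStarProjection.one_sub ⟨?_, ?_⟩
  · rw [IsIdempotentElem, Matrix.mul_assoc, ← Matrix.mul_assoc Uᵀ, hU, Matrix.one_mul]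
  · rw [IsSelfAdjoint, Matrix.star_eq_conjTranspose, Matrix.conjTranspose_eq_transpose_of_trivial,
      Matrix.transpose_mul, Matrix.transpose_transpose]

lemma proj_TSpace (hU : Uᵀ * U = 1) (N : Mat d) :
    proj (TSpace U) N = (2⁻¹ : ℝ) • (N + Nᵀ) -
      (1 - U * Uᵀ) * ((2⁻¹ : ℝ) • (N + Nᵀ)) * (1 - U * Uᵀ) := by
  set S : Mat d := (2⁻¹ : ℝ) • (N + Nᵀ) with hSdef
  set Q : Mat d := 1 - U * Uᵀ with hQdef
  have hS : Sᵀ = S := by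
    rw [hSdef, Matrix.transpose_smul, Matrix.transpose_add, Matrix.transpose_transpose, add_comm]
  have hQ : Qᵀ = Q := by
    simp [hQdef, Matrix.transpose_sub, Matrix.transpose_mul]
  have hQU : Q * U = 0 := by
    rw [hQdef, Matrix.sub_mul, Matrix.one_mul, Matrix.mul_assoc, hU, Matrix.mul_one, sub_self]
  apply proj_eq_of_mem_of_minner_eq_zero
  -- with `P = U Uᵀ`, `S - Q S Q = P S + S P - P S P`
  · refine ⟨S * U - (2⁻¹ : ℝ) • (U * (Uᵀ * S * U)), ?_⟩
    simp only [hQdef, Matrix.transpose_sub, Matrix.transpose_smul, Matrix.transpose_mul,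
      Matrix.transpose_transpose, hS, Matrix.mul_sub, Matrix.sub_mul, Matrix.mul_smul,
      Matrix.smul_mul, Matrix.mul_assoc, Matrix.one_mul, Matrix.mul_one]
    module
  · intro w hw
    have hw' : wᵀ = w := by
      obtain ⟨X, rfl⟩ := hw
      rw [Matrix.transpose_add, Matrix.transpose_mul, Matrix.transpose_mul,
        Matrix.transpose_transpose, Matrix.transpose_transpose, add_comm]
    have hskew : minner ((2⁻¹ : ℝ) • (N - Nᵀ)) w = 0 :=
      minner_eq_zero_of_transpose_eq_neg (by rw [Matrix.transpose_smul, Matrix.transpose_sub,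
        Matrix.transpose_transpose, ← smul_neg, neg_sub]) hw'
    have hcompl : minner (Q * S * Q) w = 0 :=
      minner_eq_zero_of_mul_eq_zero (by simp only [Matrix.mul_assoc, hQU, Matrix.mul_zero])
        (by simp only [Matrix.transpose_mul, hQ, hS, Matrix.mul_assoc, hQU, Matrix.mul_zero]) w hw
    have hsplit : N - (S - Q * S * Q) = (2⁻¹ : ℝ) • (N - Nᵀ) + Q * S * Q := by
      rw [hSdef]; module
    rw [hsplit, minner_add_left, hskew, hcompl, add_zero]

lemma norm_proj_TSpace_le (hU : Uᵀ * U = 1) (N : Mat d) :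
    ‖proj (TSpace U) N‖ ≤ 2 * ‖N‖ := by
  have hQ : ‖1 - U * Uᵀ‖ ≤ 1 := (isStarProjection_one_sub_mul_transpose hU).norm_le
  have hS : ‖(2⁻¹ : ℝ) • (N + Nᵀ)‖ ≤ ‖N‖ := by
    rw [norm_smul, Real.norm_of_nonneg (by norm_num)]
    linarith [norm_add_le N Nᵀ, norm_transpose N]
  rw [proj_TSpace hU]
  calc _ ≤ ‖(2⁻¹ : ℝ) • (N + Nᵀ)‖
        + ‖1 - U * Uᵀ‖ * ‖(2⁻¹ : ℝ) • (N + Nᵀ)‖ * ‖1 - U * Uᵀ‖ :=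
        (norm_sub_le _ _).trans (add_le_add_right norm_mul₃_le _)
    _ ≤ ‖N‖ + 1 * ‖N‖ * 1 := by gcongr
    _ = 2 * ‖N‖ := by ring

end TangentSpace

section Transversality

variable {d : ℕ}

lemma normInf_le_two_mul_xi_mul_norm {V W : Submodule ℝ (Mat d)} (hV : V ≠ ⊥)
    (hρ : rho V W ≤ xi V / 2) {M : Mat d} (hM : M ∈ W) : normInf M ≤ 2 * xi V * ‖M‖ := by
  have hξ : 0 ≤ xi V := (xi_pos hV).le
  have hξ' : xi V ≤ 1 := xi_le_one hV
  have htwist : ‖proj V M - M‖ ≤ xi V / 2 * ‖M‖ := by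
    have h := (norm_proj_sub_proj_le V W M).trans (mul_le_mul_of_nonneg_right hρ (norm_nonneg M))
    rwa [proj_of_mem hM] at h
  have hproj : ‖proj V M‖ ≤ ‖M‖ + xi V / 2 * ‖M‖ := by
    linarith [norm_le_norm_add_norm_sub' (proj V M) M]
  calc normInf M = normInf (proj V M + (M - proj V M)) := by rw [add_sub_cancel]
    _ ≤ normInf (proj V M) + normInf (M - proj V M) := normInf_add_le _ _
    _ ≤ xi V * ‖proj V M‖ + ‖proj V M - M‖ := by
        rw [← norm_sub_rev]
        exact add_le_add (normInf_le_xi_mul_norm (proj_mem V M)) (normInf_le_norm _)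
    _ ≤ xi V * (‖M‖ + xi V / 2 * ‖M‖) + xi V / 2 * ‖M‖ := by gcongr
    _ ≤ 2 * xi V * ‖M‖ := by
        nlinarith [mul_nonneg (mul_nonneg hξ (norm_nonneg M)) (sub_nonneg.2 hξ')]

lemma one_le_two_mul_xi_mul_mu {V W Ω : Submodule ℝ (Mat d)} (hV : V ≠ ⊥)
    (hρ : rho V W ≤ xi V / 2) {M : Mat d} (hMW : M ∈ W) (hMΩ : M ∈ Ω) (hM0 : M ≠ 0) :
    1 ≤ 2 * xi V * mu Ω := by
  have hM : 0 < ‖M‖ := norm_pos_iff.2 hM0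
  have hμ := norm_le_mu_mul_normInf hMΩ
  have hμ0 : 0 < mu Ω := pos_of_mul_pos_left (hM.trans_le hμ) (normInf_nonneg M)
  have : ‖M‖ * 1 ≤ ‖M‖ * (2 * xi V * mu Ω) :=
    calc ‖M‖ * 1 ≤ mu Ω * normInf M := by rw [mul_one]; exact hμ
      _ ≤ mu Ω * (2 * xi V * ‖M‖) :=
          mul_le_mul_of_nonneg_left (normInf_le_two_mul_xi_mul_norm hV hρ hMW) hμ0.le
      _ = ‖M‖ * (2 * xi V * mu Ω) := by ring
  exact le_of_mul_le_mul_left this hM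

end Transversality

def hessAₗ {d : ℕ} (Θ : Mat d) : Mat d →ₗ[ℝ] Mat d where
  toFun := hessA Θ
  map_add' M N := by
    simp only [hessA, minner, Matrix.trace_add, mul_add, add_smul, Finset.sum_add_distrib]
    abel
  map_smul' c M := by
    simp only [hessA, minner, Matrix.mul_smul, Matrix.trace_smul, smul_eq_mul, smul_sub,
      Finset.smul_sum, smul_smul, RingHom.id_apply]
    congr 1
    exact Finset.sum_congr rfl fun x _ => by ring_nf

namespace Setup

variable {d r : ℕ} (C : Setup d r)

lemma alphaC_le_two_mul_betaC {T' : Submodule ℝ (Mat d)} (hT' : IsTangentSpace d r T')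
    (hρ : rho C.Tt T' ≤ C.xiT / 2) {M : Mat d} (hMΩ : M ∈ C.Om) (hMT' : M ∈ T')
    (hM0 : M ≠ 0) : C.alphaC ≤ 2 * C.betaC := by
  obtain ⟨U', D', hU', hD', hD'unit, rfl⟩ := hT'
  set M₁ := ‖M‖⁻¹ • M
  have hM₁ : specNorm M₁ = 1 := by
    rw [specNorm_eq_norm, norm_smul, norm_inv, norm_norm,
      inv_mul_cancel₀ (norm_ne_zero_iff.2 hM0)]
  have hαT : C.alphaT (C.xiT / 2) ≤ specNorm (proj (TSpace U') (C.Hop M₁)) := by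
    refine csInf_le ⟨0, ?_⟩ ⟨TSpace U', ⟨U', D', hU', hD', hD'unit, rfl⟩, hρ, M₁,
      Submodule.smul_mem _ _ hMT', hM₁, rfl⟩
    rintro t ⟨-, -, -, N, -, -, rfl⟩
    exact specNorm_eq_norm _ ▸ norm_nonneg _
  have hβΩ : specNorm (C.Hop M₁) ≤ C.betaOm := by
    refine le_csSup ((bddAbove_specNorm_apply (hessAₗ C.Thstar)).mono ?_)
      ⟨M₁, Submodule.smul_mem _ _ hMΩ, hM₁, rfl⟩
    rintro t ⟨N, -, hN, ht⟩
    exact ⟨N, hN, ht⟩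
  calc C.alphaC ≤ C.alphaT (C.xiT / 2) := min_le_right _ _
    _ ≤ specNorm (proj (TSpace U') (C.Hop M₁)) := hαT
    _ ≤ 2 * specNorm (C.Hop M₁) := by
        simpa only [specNorm_eq_norm] using norm_proj_TSpace_le hU' _
    _ ≤ 2 * C.betaC := by gcongr; exact hβΩ.trans (le_max_left _ _)

lemma gammaMax_lt_gammaMin {ν : ℝ} (hα : 0 < C.alphaC) (hν : 0 < ν) (hν' : ν ≤ 1 / 2)
    (hαβ : C.alphaC ≤ 2 * C.betaC) (hξ : 0 ≤ C.xiT) (hξμ : 1 ≤ 2 * C.xiT * C.muOm) :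
    C.gammaMax ν < C.gammaMin ν := by
  have hβ : 0 < C.betaC := by linarith
  have hμ : 0 < C.muOm := pos_of_mul_pos_right (one_pos.trans_le hξμ) (by positivity)
  have hνα : ν * C.alphaC ≤ C.betaC := by nlinarith
  have h2ν : 0 < 2 - ν := by linarith
  have hgrowth : 1 ≤ (2 - ν) * (2 - ν) * (2 * C.xiT * C.muOm) :=
    one_le_mul_of_one_le_of_one_le (by nlinarith) hξμ
  rw [gammaMax, gammaMin, div_lt_div_iff₀ (mul_pos (mul_pos (mul_pos two_pos hβ) h2ν) hμ)
    (mul_pos hν hα)]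
  calc ν * C.alphaC * (ν * C.alphaC) ≤ C.betaC * C.betaC :=
        mul_self_le_mul_self (by positivity) hνα
    _ < 3 * (C.betaC * C.betaC) * ((2 - ν) * (2 - ν) * (2 * C.xiT * C.muOm)) := by
        nlinarith [mul_pos hβ hβ]
    _ = _ := by ring

end Setup

theorem transversality_general (d r : ℕ) (hr : 1 ≤ r)
    (C : Setup d r) (ν : ℝ) (hstab : C.Stability ν) (hfeas : C.GammaFeasible ν) :
    ∀ T' : Submodule ℝ (Mat d), IsTangentSpace d r T' → rho C.Tt T' ≤ C.xiT / 2 →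
      C.Om ⊓ T' = ⊥ := by
  intro T' hT' hρ
  obtain ⟨hα, hν, hν', -⟩ := hstab
  refine (Submodule.eq_bot_iff _).2 fun M hM => by_contra fun hM0 => ?_
  obtain ⟨hMΩ, hMT'⟩ := Submodule.mem_inf.1 hM
  have hT : C.Tt ≠ ⊥ := TSpace_ne_bot hr C.hU
  have hξμ : 1 ≤ 2 * C.xiT * C.muOm := one_le_two_mul_xi_mul_mu hT hρ hMT' hMΩ hM0
  have hαβ : C.alphaC ≤ 2 * C.betaC := C.alphaC_le_two_mul_betaC hT' hρ hMΩ hMT' hM0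
  exact (C.gammaMax_lt_gammaMin hα hν hν' hαβ (xi_pos hT).le hξμ).not_ge hfeas

/-- transversality: under the stability and γ-feasibility assumptions,
for every tangent space `T' = T(L')` at a rank-`r` symmetric matrix `L'` with
`ρ(T,T') ≤ ξ(T)/2` it holds `Ω ∩ T' = {0}`. -/
theorem transversality (d r : ℕ) (hd : 1 ≤ d) (hr : 1 ≤ r)
    (C : Setup d r) (ν : ℝ) (hstab : C.Stability ν) (hfeas : C.GammaFeasible ν) :
    ∀ T' : Submodule ℝ (Mat d), IsTangentSpace d r T' → rho C.Tt T' ≤ C.xiT / 2 →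
      C.Om ⊓ T' = ⊥ :=
  transversality_general d r hr C ν hstab hfeas

end IsingSL
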